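/- arXiv:0901.1196 — 3 statements merged into one kernel-verified Lean document; each statement's English description precedes it below -/
import Mathlib

section
/- Let F be a free A-graded module with homogeneous basis B, and G a graded submodule of F. Define the S-support S_B(h) of a homogeneous element h ∈ F as the set of pairs (monomial, basis element) occurring with nonzero coefficient in the expansion of h in the basis B, and order elements by inclusion of S-supports. Then G admits a minimal generating set consisting of elements each of which is simple in G with respect to B, i.e., minimal with respect to the S-support order among nonzero homogeneous elements of G. -/
/-!
Among the nonzero homogeneous elements of `G` whose `S`-support lies in that of a given one, one
with minimal support is simple, since `S`-supports are finite. Every homogeneous `h ∈ G` is then a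
combination of simple elements: pick a simple `s` below `h` and subtract the multiple of `s` that
kills one term of `h`; the difference is homogeneous of the same degree with strictly smaller
support. So the simple elements span `G`; by Noetherianity finitely many of them do, and a
generating subset minimal under inclusion is a minimal generating set.
-/

/-- The `𝒜`-degree of the monomial `x^u`: the image of `u` in `ℤⁿ/L`. -/
def degQ (n : ℕ) (L : AddSubgroup (Fin n → ℤ)) (u : Fin n →₀ ℕ) : (Fin n → ℤ) ⧸ L :=
  QuotientAddGroup.mk (fun i => (u i : ℤ))

/-- The `S`-support of an element `h` of the free module `F = ⊕_{t ∈ ι} R·E_t`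
with respect to the standard basis: the pairs (monomial, basis element) occurring in `h`. -/
def SSupp (k : Type) [Field k] (n : ℕ) (ι : Type)
    (h : ι →₀ MvPolynomial (Fin n) k) : Set ((Fin n →₀ ℕ) × ι) :=
  {p | MvPolynomial.coeff p.1 (h p.2) ≠ 0}

/-- `h` is `𝒜`-homogeneous of degree `b` (the basis element `E_t` having degree `dB t`). -/
def IsHomogEl (k : Type) [Field k] (n : ℕ) (L : AddSubgroup (Fin n → ℤ)) (ι : Type)
    (dB : ι → (Fin n → ℤ) ⧸ L) (h : ι →₀ MvPolynomial (Fin n) k)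
    (b : (Fin n → ℤ) ⧸ L) : Prop :=
  ∀ (a : Fin n →₀ ℕ) (t : ι), MvPolynomial.coeff a (h t) ≠ 0 → degQ n L a + dB t = b

/-- `h` is simple in `G` with respect to the basis: there is no nonzero homogeneous
`h' ∈ G` whose `S`-support is strictly contained in that of `h`. -/
def IsSimpleEl (k : Type) [Field k] (n : ℕ) (L : AddSubgroup (Fin n → ℤ)) (ι : Type)
    (dB : ι → (Fin n → ℤ) ⧸ L)
    (G : Submodule (MvPolynomial (Fin n) k) (ι →₀ MvPolynomial (Fin n) k))
    (h : ι →₀ MvPolynomial (Fin n) k) : Prop :=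
  ¬ ∃ h' ∈ G, h' ≠ 0 ∧ (∃ b, IsHomogEl k n L ι dB h' b) ∧
      SSupp k n ι h' ⊂ SSupp k n ι h

open MvPolynomial Submodule

theorem Submodule.exists_finset_subset_minimal_span_eq {R M : Type*} [Semiring R]
    [AddCommMonoid M] [Module R M] [IsNoetherian R M] (S : Set M) :
    ∃ T : Finset M, ↑T ⊆ S ∧ span R (T : Set M) = span R S ∧
      ∀ h ∈ T, h ∉ span R ((T : Set M) \ {h}) := by
  classical
  obtain ⟨T₀, hT₀S, hT₀⟩ :=
    (fg_span_iff_fg_span_finset_subset S).1 (IsNoetherian.noetherian (span R S))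
  obtain ⟨T, ⟨hTS, hT⟩, hmin⟩ := exists_minimal_of_wellFoundedLT
    (fun T : Finset M => ↑T ⊆ S ∧ span R (T : Set M) = span R S) ⟨T₀, hT₀S, hT₀.symm⟩
  refine ⟨T, hTS, hT, fun h hhT hspan => ?_⟩
  have herase : span R ((T.erase h : Finset M) : Set M) = span R S := by
    rw [Finset.coe_erase, ← hT, ← span_insert_eq_span hspan, Set.insert_sdiff_singleton,
      Set.insert_eq_of_mem (Finset.mem_coe.2 hhT)]
  have hle := hmin ⟨(Finset.coe_erase h T).symm ▸ Set.sdiff_subset.trans hTS, herase⟩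
    (Finset.erase_subset h T)
  exact Finset.notMem_erase h T (hle hhT)

section SSupp

variable {k : Type} [Field k] {n : ℕ} {ι : Type}

theorem ssupp_finite (h : ι →₀ MvPolynomial (Fin n) k) : (SSupp k n ι h).Finite := by
  refine (h.support.finite_toSet.biUnion
    fun t _ => (h t).support.finite_toSet.image fun a => (a, t)).subset ?_
  rintro ⟨a, t⟩ (hat : coeff a (h t) ≠ 0)
  have ht : t ∈ h.support := Finsupp.mem_support_iff.2 fun h0 => hat (by simp [h0])
  exact Set.mem_biUnion ht ⟨a, MvPolynomial.mem_support_iff.2 hat, rfl⟩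

theorem ssupp_eq_empty_iff {h : ι →₀ MvPolynomial (Fin n) k} : SSupp k n ι h = ∅ ↔ h = 0 := by
  refine ⟨fun he => ?_, fun h0 => by ext; simp [SSupp, h0]⟩
  ext t a
  by_contra hc
  exact (Set.eq_empty_iff_forall_notMem.1 he (a, t)) hc

theorem ssupp_nonempty_iff {h : ι →₀ MvPolynomial (Fin n) k} :
    (SSupp k n ι h).Nonempty ↔ h ≠ 0 := by
  rw [Set.nonempty_iff_ne_empty, Ne, ssupp_eq_empty_iff]

theorem wellFounded_ssupp_ssubset :
    WellFounded fun h' h : ι →₀ MvPolynomial (Fin n) k => SSupp k n ι h' ⊂ SSupp k n ι h :=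
  Subrelation.wf (fun hlt => Set.ncard_lt_ncard hlt (ssupp_finite _))
    (measure fun h => (SSupp k n ι h).ncard).wf

theorem coeff_sub_C_smul (h s : ι →₀ MvPolynomial (Fin n) k) (c : k) (a : Fin n →₀ ℕ) (t : ι) :
    coeff a ((h - (C c : MvPolynomial (Fin n) k) • s) t) =
      coeff a (h t) - c * coeff a (s t) := by
  simp [coeff_C_mul]

theorem ssupp_sub_C_smul_subset (h s : ι →₀ MvPolynomial (Fin n) k) (c : k) :
    SSupp k n ι (h - (C c : MvPolynomial (Fin n) k) • s) ⊆
      SSupp k n ι h ∪ SSupp k n ι s := by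
  rintro ⟨a, t⟩ hp
  by_contra hn
  simp only [Set.mem_union, SSupp, Set.mem_ofPred_eq, not_or, not_not] at hp hn
  rw [coeff_sub_C_smul, hn.1, hn.2, mul_zero, sub_zero] at hp
  exact hp rfl

theorem ssupp_sub_C_smul_ssubset {h s : ι →₀ MvPolynomial (Fin n) k}
    (hsh : SSupp k n ι s ⊆ SSupp k n ι h) {a : Fin n →₀ ℕ} {t : ι}
    (hat : (a, t) ∈ SSupp k n ι s) :
    SSupp k n ι (h - (C (coeff a (h t) / coeff a (s t)) : MvPolynomial (Fin n) k) • s) ⊂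
      SSupp k n ι h := by
  refine ⟨(ssupp_sub_C_smul_subset h s _).trans (Set.union_subset le_rfl hsh), fun hsub => ?_⟩
  have hcancel := hsub (hsh hat)
  simp only [SSupp, Set.mem_ofPred_eq] at hat hcancel
  rw [coeff_sub_C_smul, div_mul_cancel₀ _ hat, sub_self] at hcancel
  exact hcancel rfl

end SSupp

section Homogeneous

variable {k : Type} [Field k] {n : ℕ} {L : AddSubgroup (Fin n → ℤ)} {ι : Type}
  {dB : ι → (Fin n → ℤ) ⧸ L}

theorem IsHomogEl.eq_of_ssupp_subset {h s : ι →₀ MvPolynomial (Fin n) k} {b b' : (Fin n → ℤ) ⧸ L}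
    (hh : IsHomogEl k n L ι dB h b) (hs : IsHomogEl k n L ι dB s b')
    (hsh : SSupp k n ι s ⊆ SSupp k n ι h) (hs0 : s ≠ 0) : b' = b := by
  obtain ⟨⟨a, t⟩, hat⟩ := ssupp_nonempty_iff.2 hs0
  rw [← hs a t hat, hh a t (hsh hat)]

theorem IsHomogEl.sub_C_smul {h s : ι →₀ MvPolynomial (Fin n) k} {b : (Fin n → ℤ) ⧸ L}
    (hh : IsHomogEl k n L ι dB h b) (hs : IsHomogEl k n L ι dB s b) (c : k) :
    IsHomogEl k n L ι dB (h - (C c : MvPolynomial (Fin n) k) • s) b := by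
  intro a t hat
  rcases ssupp_sub_C_smul_subset h s c (show (a, t) ∈ SSupp k n ι _ from hat) with hath | hats
  exacts [hh a t hath, hs a t hats]

variable {G : Submodule (MvPolynomial (Fin n) k) (ι →₀ MvPolynomial (Fin n) k)}

theorem exists_isSimpleEl_ssupp_subset {h : ι →₀ MvPolynomial (Fin n) k} (hG : h ∈ G)
    (h0 : h ≠ 0) (hhom : ∃ b, IsHomogEl k n L ι dB h b) :
    ∃ s ∈ G, s ≠ 0 ∧ (∃ b, IsHomogEl k n L ι dB s b) ∧ IsSimpleEl k n L ι dB G s ∧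
      SSupp k n ι s ⊆ SSupp k n ι h := by
  obtain ⟨s, ⟨hsG, hs0, hshom, hsh⟩, hmin⟩ := wellFounded_ssupp_ssubset.has_min
    {g | g ∈ G ∧ g ≠ 0 ∧ (∃ b, IsHomogEl k n L ι dB g b) ∧ SSupp k n ι g ⊆ SSupp k n ι h}
    ⟨h, hG, h0, hhom, le_rfl⟩
  refine ⟨s, hsG, hs0, hshom, ?_, hsh⟩
  rintro ⟨g, hgG, hg0, hghom, hgs⟩
  exact hmin g ⟨hgG, hg0, hghom, hgs.subset.trans hsh⟩ hgs

theorem mem_span_isSimpleEl {h : ι →₀ MvPolynomial (Fin n) k} (hG : h ∈ G)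
    (hhom : ∃ b, IsHomogEl k n L ι dB h b) :
    h ∈ span (MvPolynomial (Fin n) k)
      {g | g ∈ G ∧ (∃ b, IsHomogEl k n L ι dB g b) ∧ IsSimpleEl k n L ι dB G g} := by
  induction h using wellFounded_ssupp_ssubset.induction with | _ h ih
  rcases eq_or_ne h 0 with rfl | h0
  · exact zero_mem _
  obtain ⟨b, hb⟩ := hhom
  obtain ⟨s, hsG, hs0, ⟨b', hb'⟩, hsimple, hsh⟩ := exists_isSimpleEl_ssupp_subset hG h0 ⟨b, hb⟩
  obtain ⟨⟨a, t⟩, hat⟩ := ssupp_nonempty_iff.2 hs0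
  set c := coeff a (h t) / coeff a (s t)
  have hb's : IsHomogEl k n L ι dB s b := hb.eq_of_ssupp_subset hb' hsh hs0 ▸ hb'
  have hrest := ih _ (ssupp_sub_C_smul_ssubset hsh hat)
    (sub_mem hG (G.smul_mem _ hsG)) ⟨b, IsHomogEl.sub_C_smul hb hb's c⟩
  rw [← sub_add_cancel h ((C c : MvPolynomial (Fin n) k) • s)]
  exact add_mem hrest (smul_mem _ _ (subset_span ⟨hsG, ⟨b, hb's⟩, hsimple⟩))

end Homogeneous

theorem exists_minimal_simple_generating_set_general (k : Type) [Field k] (n : ℕ)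
    (L : AddSubgroup (Fin n → ℤ))
    (ι : Type) [Fintype ι] (dB : ι → (Fin n → ℤ) ⧸ L)
    (G : Submodule (MvPolynomial (Fin n) k) (ι →₀ MvPolynomial (Fin n) k))
    (hG : G = Submodule.span (MvPolynomial (Fin n) k)
      {h | h ∈ G ∧ ∃ b, IsHomogEl k n L ι dB h b}) :
    ∃ S : Set (ι →₀ MvPolynomial (Fin n) k),
      (∀ h ∈ S, h ∈ G ∧ (∃ b, IsHomogEl k n L ι dB h b) ∧ IsSimpleEl k n L ι dB G h) ∧
      Submodule.span (MvPolynomial (Fin n) k) S = G ∧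
      (∀ h ∈ S, h ∉ Submodule.span (MvPolynomial (Fin n) k) (S \ {h})) := by
  set simples := {g | g ∈ G ∧ (∃ b, IsHomogEl k n L ι dB g b) ∧ IsSimpleEl k n L ι dB G g}
  have hspan : span (MvPolynomial (Fin n) k) simples = G := by
    refine le_antisymm (span_le.2 fun g hg => hg.1) ?_
    conv_lhs => rw [hG]
    exact span_le.2 fun g ⟨hgG, hghom⟩ => mem_span_isSimpleEl hgG hghom
  obtain ⟨T, hTsimple, hTspan, hTmin⟩ :=
    exists_finset_subset_minimal_span_eq (R := MvPolynomial (Fin n) k) simples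
  exact ⟨T, fun h hh => hTsimple hh, hTspan.trans hspan, hTmin⟩

/-- a graded submodule `G` of a free `𝒜`-graded module `F` admits a minimal
generating set consisting of homogeneous elements, each simple in `G` with respect to the
given basis. -/
theorem exists_minimal_simple_generating_set (k : Type) [Field k] (n : ℕ)
    (L : AddSubgroup (Fin n → ℤ)) (hL : ∀ w ∈ L, (∀ i, 0 ≤ w i) → w = 0)
    (ι : Type) [Fintype ι] (dB : ι → (Fin n → ℤ) ⧸ L)
    (G : Submodule (MvPolynomial (Fin n) k) (ι →₀ MvPolynomial (Fin n) k))
    (hG : G = Submodule.span (MvPolynomial (Fin n) k)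
      {h | h ∈ G ∧ ∃ b, IsHomogEl k n L ι dB h b}) :
    ∃ S : Set (ι →₀ MvPolynomial (Fin n) k),
      (∀ h ∈ S, h ∈ G ∧ (∃ b, IsHomogEl k n L ι dB h b) ∧ IsSimpleEl k n L ι dB G h) ∧
      Submodule.span (MvPolynomial (Fin n) k) S = G ∧
      (∀ h ∈ S, h ∉ Submodule.span (MvPolynomial (Fin n) k) (S \ {h})) :=
  exists_minimal_simple_generating_set_general k n L ι dB G hG
end

section
/- Let F be a free 𝒜-graded module with finite homogeneous basis B and fix b ∈ 𝒜. Then the set C = {(x^a, E_t) : E_t ∈ B, deg_𝒜(x^a) + deg_𝒜(E_t) = b} is finite. Consequently, the set of scalar-equivalence classes of homogeneous elements of 𝒜-degree b in F that are simple in a fixed graded submodule G with respect to B is finite. -/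
/-! Two monomials of the same `𝒜`-degree differ by an element of `L`; since `L` contains no
nonzero vector of `ℕⁿ`, comparable monomials of equal degree coincide. So every degree fiber is
an antichain of `ℕⁿ`, hence finite by Dickson's lemma, and so is the set `C` of pairs of degree
`b`. A simple element `h` is determined up to a scalar by its `S`-support `S ⊆ C`: if `g ∈ G` has
the same support, subtracting the multiple of `g` that kills one coefficient of `h` leaves an
element of `G` of smaller support, which must vanish. Choosing one such `g` for every `S ⊆ C`
gives the finite set of representatives. -/

section

variable {k : Type} [Field k] {n : ℕ} {L : AddSubgroup (Fin n → ℤ)} {ι : Type}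

lemma eq_of_le_of_degQ_eq (hL : ∀ w ∈ L, (∀ i, 0 ≤ w i) → w = 0) {a a' : Fin n →₀ ℕ}
    (hle : a ≤ a') (hdeg : degQ n L a = degQ n L a') : a = a' := by
  have hmem : (fun i => (a' i : ℤ)) - (fun i => (a i : ℤ)) ∈ L := by
    rw [← neg_add_eq_sub]
    exact QuotientAddGroup.eq.mp hdeg
  have hzero := hL _ hmem fun i => sub_nonneg.mpr (Int.ofNat_le.mpr (hle i))
  ext i
  exact Int.ofNat_inj.mp (sub_eq_zero.mp (congrFun hzero i)).symm

lemma finite_setOf_degQ_eq (hL : ∀ w ∈ L, (∀ i, 0 ≤ w i) → w = 0)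
    (c : (Fin n → ℤ) ⧸ L) : {a : Fin n →₀ ℕ | degQ n L a = c}.Finite :=
  WellQuasiOrderedLE.finite_of_isAntichain fun _ ha _ ha' hne hle =>
    hne (eq_of_le_of_degQ_eq hL hle (ha.trans ha'.symm))

lemma finite_setOf_degQ_add_eq (hL : ∀ w ∈ L, (∀ i, 0 ≤ w i) → w = 0) [Finite ι]
    (dB : ι → (Fin n → ℤ) ⧸ L) (b : (Fin n → ℤ) ⧸ L) :
    {p : (Fin n →₀ ℕ) × ι | degQ n L p.1 + dB p.2 = b}.Finite := by
  refine ((Set.finite_iUnion fun t => finite_setOf_degQ_eq hL (b - dB t)).prod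
    Set.finite_univ).subset ?_
  rintro ⟨a, t⟩ hp
  exact ⟨Set.mem_iUnion.mpr ⟨t, eq_sub_of_add_eq hp⟩, Set.mem_univ t⟩

lemma isHomogEl_iff_SSupp_subset {dB : ι → (Fin n → ℤ) ⧸ L}
    {h : ι →₀ MvPolynomial (Fin n) k} {b : (Fin n → ℤ) ⧸ L} :
    IsHomogEl k n L ι dB h b ↔
      SSupp k n ι h ⊆ {p : (Fin n →₀ ℕ) × ι | degQ n L p.1 + dB p.2 = b} :=
  ⟨fun hh p hp => hh p.1 p.2 hp,
    fun hh a t hat => hh (show (a, t) ∈ SSupp k n ι h from hat)⟩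

lemma SSupp_nonempty {h : ι →₀ MvPolynomial (Fin n) k} (h0 : h ≠ 0) :
    (SSupp k n ι h).Nonempty := by
  obtain ⟨t, ht⟩ := Finsupp.ne_iff.mp h0
  obtain ⟨a, ha⟩ := MvPolynomial.ne_zero_iff.mp ht
  exact ⟨(a, t), ha⟩

lemma coeff_sub_smul_apply (h g : ι →₀ MvPolynomial (Fin n) k) (c : k) (a : Fin n →₀ ℕ)
    (t : ι) : MvPolynomial.coeff a ((h - c • g) t) =
      MvPolynomial.coeff a (h t) - c * MvPolynomial.coeff a (g t) := by
  simp only [Finsupp.sub_apply, Finsupp.smul_apply, MvPolynomial.coeff_sub,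
    MvPolynomial.coeff_smul, smul_eq_mul]

lemma SSupp_sub_smul_subset {h g : ι →₀ MvPolynomial (Fin n) k}
    (hsupp : SSupp k n ι g = SSupp k n ι h) (c : k) :
    SSupp k n ι (h - c • g) ⊆ SSupp k n ι h := by
  rintro ⟨a, t⟩ hat
  by_contra hh
  have hg : (a, t) ∉ SSupp k n ι g := hsupp ▸ hh
  exact hat (by rw [coeff_sub_smul_apply, not_not.mp hh, not_not.mp hg, mul_zero, sub_zero])

lemma IsSimpleEl.eq_smul_of_SSupp_eq {dB : ι → (Fin n → ℤ) ⧸ L}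
    {G : Submodule (MvPolynomial (Fin n) k) (ι →₀ MvPolynomial (Fin n) k)}
    {h g : ι →₀ MvPolynomial (Fin n) k} {b : (Fin n → ℤ) ⧸ L}
    (hsimple : IsSimpleEl k n L ι dB G h) (hG : h ∈ G) (h0 : h ≠ 0)
    (hhom : IsHomogEl k n L ι dB h b) (hgG : g ∈ G) (hsupp : SSupp k n ι g = SSupp k n ι h) :
    ∃ c : k, c ≠ 0 ∧ h = c • g := by
  obtain ⟨⟨a₀, t₀⟩, hp₀⟩ := SSupp_nonempty h0
  have hp₀g : MvPolynomial.coeff a₀ (g t₀) ≠ 0 :=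
    show (a₀, t₀) ∈ SSupp k n ι g from hsupp ▸ hp₀
  set c := MvPolynomial.coeff a₀ (h t₀) / MvPolynomial.coeff a₀ (g t₀)
  have hsub : SSupp k n ι (h - c • g) ⊆ SSupp k n ι h := SSupp_sub_smul_subset hsupp c
  have hp₀' : (a₀, t₀) ∉ SSupp k n ι (h - c • g) := fun hp =>
    hp (by rw [coeff_sub_smul_apply, div_mul_cancel₀ _ hp₀g, sub_self])
  have hzero : h - c • g = 0 := by
    by_contra hne
    refine hsimple ⟨h - c • g, G.sub_mem hG (G.smul_of_tower_mem c hgG), hne,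
      ⟨b, isHomogEl_iff_SSupp_subset.mpr (hsub.trans (isHomogEl_iff_SSupp_subset.mp hhom))⟩,
      ssubset_of_subset_not_subset hsub fun hsup => hp₀' (hsup hp₀)⟩
  exact ⟨c, div_ne_zero hp₀ hp₀g, sub_eq_zero.mp hzero⟩

end

/-- for `b ∈ 𝒜`, the set of pairs (monomial, basis element) of total degree `b`
is finite, and consequently there are only finitely many scalar-equivalence classes of
simple homogeneous elements of degree `b` in a graded submodule `G`. -/
theorem finitely_many_simple_classes (k : Type) [Field k] (n : ℕ)
    (L : AddSubgroup (Fin n → ℤ)) (hL : ∀ w ∈ L, (∀ i, 0 ≤ w i) → w = 0)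
    (ι : Type) [Fintype ι] (dB : ι → (Fin n → ℤ) ⧸ L)
    (G : Submodule (MvPolynomial (Fin n) k) (ι →₀ MvPolynomial (Fin n) k))
    (b : (Fin n → ℤ) ⧸ L) :
    {p : (Fin n →₀ ℕ) × ι | degQ n L p.1 + dB p.2 = b}.Finite ∧
    ∃ T : Set (ι →₀ MvPolynomial (Fin n) k), T.Finite ∧
      ∀ h, h ∈ G → h ≠ 0 → IsHomogEl k n L ι dB h b → IsSimpleEl k n L ι dB G h →
        ∃ g ∈ T, ∃ c : k, c ≠ 0 ∧ h = c • g := by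
  set C := {p : (Fin n →₀ ℕ) × ι | degQ n L p.1 + dB p.2 = b}
  have hC : C.Finite := finite_setOf_degQ_add_eq hL dB b
  let rep := Function.invFunOn (SSupp k n ι) (G : Set (ι →₀ MvPolynomial (Fin n) k))
  refine ⟨hC, rep '' {S | S ⊆ C}, hC.finite_subsets.image rep, ?_⟩
  intro h hG h0 hhom hsimple
  obtain ⟨hgG, hgsupp⟩ := Function.invFunOn_pos ⟨h, hG, rfl⟩
  exact ⟨_, ⟨_, isHomogEl_iff_SSupp_subset.mp hhom, rfl⟩,
    hsimple.eq_smul_of_SSupp_eq hG h0 hhom hgG hgsupp⟩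
end

section
/- Let I_L be a lattice ideal and b ∈ 𝒜. Let I_{L,b} be the ideal generated by all binomials of I_L of 𝒜-degree strictly smaller than b, and let G(b) be the graph on vertex set C_b with an edge {x^u, x^v} whenever x^u − x^v ∈ I_{L,b}. Then a subset of C_b is the vertex set of a connected component of G(b) if and only if it is the vertex set of a connected component of Δ_gcd(b). -/
/-- The partial order on `𝒜`: `b ≤ c` iff `c = b + e` for some `e ∈ 𝒜`. -/
def degLE (n : ℕ) (L : AddSubgroup (Fin n → ℤ)) (b c : (Fin n → ℤ) ⧸ L) : Prop :=
  ∃ w : Fin n →₀ ℕ, b + degQ n L w = c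

/-- The strict order on `𝒜`. -/
def degLT (n : ℕ) (L : AddSubgroup (Fin n → ℤ)) (b c : (Fin n → ℤ) ⧸ L) : Prop :=
  degLE n L b c ∧ b ≠ c

/-- The ideal `I_{L,b}` generated by all binomials of the lattice ideal `I_L` of
`𝒜`-degree strictly smaller than `b`. -/
noncomputable def latticeIdealBelow (k : Type) [Field k] (n : ℕ) (L : AddSubgroup (Fin n → ℤ))
    (b : (Fin n → ℤ) ⧸ L) : Ideal (MvPolynomial (Fin n) k) :=
  Ideal.span {f | ∃ u v : Fin n →₀ ℕ, (fun i => (u i : ℤ) - (v i : ℤ)) ∈ L ∧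
    degLT n L (degQ n L u) b ∧ f = MvPolynomial.monomial u 1 - MvPolynomial.monomial v 1}

/-- The 1-skeleton of the gcd-complex `Δ_gcd(b)` on the fiber `C_b`. -/
def gcdGraph (n : ℕ) (L : AddSubgroup (Fin n → ℤ)) (b : (Fin n → ℤ) ⧸ L) :
    SimpleGraph {u : Fin n →₀ ℕ // degQ n L u = b} :=
  SimpleGraph.fromRel (fun u v => ∃ j : Fin n, u.1 j ≠ 0 ∧ v.1 j ≠ 0)

/-- The graph `G(b)` on the fiber `C_b`: `x^u` and `x^v` are adjacent when
`x^u - x^v ∈ I_{L,b}`. -/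
def fiberGraph (k : Type) [Field k] (n : ℕ) (L : AddSubgroup (Fin n → ℤ))
    (b : (Fin n → ℤ) ⧸ L) : SimpleGraph {u : Fin n →₀ ℕ // degQ n L u = b} :=
  SimpleGraph.fromRel (fun u v =>
    (MvPolynomial.monomial u.1 1 - MvPolynomial.monomial v.1 1 : MvPolynomial (Fin n) k)
      ∈ latticeIdealBelow k n L b)

open MvPolynomial

namespace SimpleGraph

variable {V : Type*} {G H : SimpleGraph V}

theorem reachable_eq_of_le_of_adj_reachable (hGH : G ≤ H)
    (hHG : ∀ u v, H.Adj u v → G.Reachable u v) : H.Reachable = G.Reachable := by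
  refine le_antisymm (fun u v huv => ?_) (Reachable.mono' hGH)
  rw [reachable_iff_reflTransGen] at huv ⊢
  exact huv.lift' id fun x y hxy => (reachable_iff_reflTransGen x y).mp (hHG x y hxy)

theorem exists_eq_supp_iff_of_reachable_eq (h : G.Reachable = H.Reachable) (S : Set V) :
    (∃ c : G.ConnectedComponent, S = {u | G.connectedComponentMk u = c}) ↔
      ∃ c : H.ConnectedComponent, S = {u | H.connectedComponentMk u = c} := by
  have hsupp : ∀ v, {u | G.connectedComponentMk u = G.connectedComponentMk v} =
      {u | H.connectedComponentMk u = H.connectedComponentMk v} := by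
    intro v
    simp only [ConnectedComponent.eq, h]
  constructor
  · rintro ⟨c, rfl⟩
    induction c using ConnectedComponent.ind with | _ v => exact ⟨_, hsupp v⟩
  · rintro ⟨c, rfl⟩
    induction c using ConnectedComponent.ind with | _ v => exact ⟨_, (hsupp v).symm⟩

end SimpleGraph

theorem constr_basisMonomials_monomial {σ k : Type*} [CommRing k] (w : (σ →₀ ℕ) → k)
    (a : σ →₀ ℕ) (c : k) : (basisMonomials σ k).constr k w (monomial a c) = c * w a := by
  have : monomial a c = c • basisMonomials σ k a := by simp [coe_basisMonomials, smul_monomial]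
  rw [this, map_smul, Module.Basis.constr_basis, smul_eq_mul]

theorem constr_basisMonomials_eq_zero_of_mem_span {σ k : Type*} [CommRing k]
    {R : (σ →₀ ℕ) → (σ →₀ ℕ) → Prop} (w : (σ →₀ ℕ) → k)
    (hw : ∀ u v, R u v → ∀ a, w (a + u) = w (a + v)) {f : MvPolynomial σ k}
    (hf : f ∈ Ideal.span {f | ∃ u v, R u v ∧ f = monomial u 1 - monomial v 1}) :
    (basisMonomials σ k).constr k w f = 0 := by
  set ψ := (basisMonomials σ k).constr k w
  suffices ∀ p, ψ (p * f) = 0 by simpa using this 1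
  refine Submodule.span_induction ?_ (by simp) ?_ ?_ hf
  · rintro _ ⟨u, v, huv, rfl⟩ p
    induction p using MvPolynomial.induction_on' with
    | monomial a c =>
      rw [mul_sub, monomial_mul, monomial_mul, map_sub, constr_basisMonomials_monomial,
        constr_basisMonomials_monomial, hw u v huv, sub_self]
    | add p q hp hq => rw [add_mul, map_add, hp, hq, add_zero]
  · intro x y _ _ hx hy p
    rw [mul_add, map_add, hx, hy, add_zero]
  · intro r x _ hx p
    rw [smul_eq_mul, ← mul_assoc]
    exact hx (p * r)

variable {n : ℕ} {L : AddSubgroup (Fin n → ℤ)}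

theorem degQ_add (u v : Fin n →₀ ℕ) : degQ n L (u + v) = degQ n L u + degQ n L v := by
  rw [degQ, degQ, degQ, ← QuotientAddGroup.mk_add]
  congr 1

theorem degQ_eq_degQ_iff {u v : Fin n →₀ ℕ} :
    degQ n L u = degQ n L v ↔ (fun i => (u i : ℤ) - (v i : ℤ)) ∈ L :=
  QuotientAddGroup.eq_iff_sub_mem

theorem degLT_degQ_add (hL : ∀ w ∈ L, (∀ i, 0 ≤ w i) → w = 0) (u : Fin n →₀ ℕ)
    {d : Fin n →₀ ℕ} (hd : d ≠ 0) : degLT n L (degQ n L u) (degQ n L (u + d)) := by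
  refine ⟨⟨d, (degQ_add u d).symm⟩, fun h => hd ?_⟩
  rw [degQ_add, left_eq_add, degQ, QuotientAddGroup.eq_zero_iff] at h
  ext i
  simpa using congrFun (hL _ h fun i => by positivity) i

theorem monomial_add_sub_monomial_add_mem_latticeIdealBelow (k : Type) [Field k]
    (hL : ∀ w ∈ L, (∀ i, 0 ≤ w i) → w = 0) {d u v : Fin n →₀ ℕ} (hd : d ≠ 0)
    (huv : degQ n L u = degQ n L v) :
    (monomial (d + u) 1 - monomial (d + v) 1 : MvPolynomial (Fin n) k) ∈
      latticeIdealBelow k n L (degQ n L (d + u)) := by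
  have hgen : (monomial u 1 - monomial v 1 : MvPolynomial (Fin n) k) ∈
      latticeIdealBelow k n L (degQ n L (d + u)) :=
    Ideal.subset_span ⟨u, v, degQ_eq_degQ_iff.mp huv, add_comm d u ▸ degLT_degQ_add hL u hd, rfl⟩
  simpa only [mul_sub, monomial_mul, one_mul] using Ideal.mul_mem_left _ (monomial d 1) hgen

variable {b : (Fin n → ℤ) ⧸ L}

theorem gcdGraph_adj {u v : {u : Fin n →₀ ℕ // degQ n L u = b}} :
    (gcdGraph n L b).Adj u v ↔ u ≠ v ∧ ∃ j, u.1 j ≠ 0 ∧ v.1 j ≠ 0 := by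
  rw [gcdGraph, SimpleGraph.fromRel_adj]
  exact and_congr_right fun _ => or_iff_left_of_imp fun ⟨j, hv, hu⟩ => ⟨j, hu, hv⟩

theorem fiberGraph_adj {k : Type} [Field k] {u v : {u : Fin n →₀ ℕ // degQ n L u = b}} :
    (fiberGraph k n L b).Adj u v ↔
      u ≠ v ∧ (monomial u.1 1 - monomial v.1 1 : MvPolynomial (Fin n) k) ∈
        latticeIdealBelow k n L b := by
  rw [fiberGraph, SimpleGraph.fromRel_adj]
  refine and_congr_right fun _ => or_iff_left_of_imp fun h => ?_
  simpa using neg_mem h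

theorem gcdGraph_reachable_of_ne_zero {u v : {u : Fin n →₀ ℕ // degQ n L u = b}} {j : Fin n}
    (hu : u.1 j ≠ 0) (hv : v.1 j ≠ 0) : (gcdGraph n L b).Reachable u v := by
  by_cases huv : u = v
  · exact huv ▸ .refl u
  · exact (gcdGraph_adj.mpr ⟨huv, j, hu, hv⟩).reachable

theorem gcdGraph_le_fiberGraph (k : Type) [Field k] (hL : ∀ w ∈ L, (∀ i, 0 ≤ w i) → w = 0) :
    gcdGraph n L b ≤ fiberGraph k n L b := by
  intro u v huv
  obtain ⟨hne, j, hu, hv⟩ := gcdGraph_adj.mp huv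
  refine fiberGraph_adj.mpr ⟨hne, ?_⟩
  have hj : ∀ w : Fin n →₀ ℕ, w j ≠ 0 → Finsupp.single j 1 ≤ w := fun w hw =>
    Finsupp.single_le_iff.mpr (Nat.one_le_iff_ne_zero.mpr hw)
  obtain ⟨u', hu'⟩ := le_iff_exists_add.mp (hj u.1 hu)
  obtain ⟨v', hv'⟩ := le_iff_exists_add.mp (hj v.1 hv)
  have hdeg : degQ n L u' = degQ n L v' := by
    have := u.2.trans v.2.symm
    rwa [hu', hv', degQ_add, degQ_add, add_right_inj] at this
  have := monomial_add_sub_monomial_add_mem_latticeIdealBelow k hL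
    (d := Finsupp.single j 1) (Finsupp.single_ne_zero.mpr one_ne_zero) hdeg
  rwa [← hu', ← hv', u.2] at this

theorem gcdGraph_reachable_add {a u v : Fin n →₀ ℕ} (ha : a ≠ 0) (hu : degQ n L (a + u) = b)
    (hv : degQ n L (a + v) = b) : (gcdGraph n L b).Reachable ⟨a + u, hu⟩ ⟨a + v, hv⟩ := by
  obtain ⟨j, hj⟩ : ∃ j, a j ≠ 0 := Finsupp.ne_iff.mp ha
  exact gcdGraph_reachable_of_ne_zero (j := j) (by simp [hj]) (by simp [hj])

theorem gcdGraph_reachable_of_mem_latticeIdealBelow {k : Type} [Field k]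
    {u v : {u : Fin n →₀ ℕ // degQ n L u = b}}
    (h : (monomial u.1 1 - monomial v.1 1 : MvPolynomial (Fin n) k) ∈ latticeIdealBelow k n L b) :
    (gcdGraph n L b).Reachable u v := by
  set T : Set (Fin n →₀ ℕ) := {m | ∃ hm : degQ n L m = b, (gcdGraph n L b).Reachable u ⟨m, hm⟩}
  have hT : ∀ u' v', degQ n L u' = degQ n L v' → degQ n L u' ≠ b →
      ∀ a, a + u' ∈ T → a + v' ∈ T := by
    rintro u' v' huv hb a ⟨hu, hr⟩
    have ha : a ≠ 0 := by
      rintro rfl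
      exact hb (by simpa using hu)
    have hv : degQ n L (a + v') = b := by rw [degQ_add, ← huv, ← degQ_add, hu]
    exact ⟨hv, hr.trans (gcdGraph_reachable_add ha hu hv)⟩
  have hspan : latticeIdealBelow k n L b = Ideal.span {f | ∃ u v,
      ((fun i => (u i : ℤ) - (v i : ℤ)) ∈ L ∧ degLT n L (degQ n L u) b) ∧
        f = monomial u 1 - monomial v 1} := by
    simp only [latticeIdealBelow, and_assoc]
  have hψ := constr_basisMonomials_eq_zero_of_mem_span (T.indicator (fun _ => (1 : k))) ?_
    (hspan ▸ h)
  · by_contra hv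
    rw [map_sub, constr_basisMonomials_monomial, constr_basisMonomials_monomial,
      Set.indicator_of_mem (show u.1 ∈ T from ⟨u.2, .refl u⟩),
      Set.indicator_of_notMem (show v.1 ∉ T from fun ⟨_, hr⟩ => hv hr)] at hψ
    simp at hψ
  · rintro u' v' ⟨hmem, hlt⟩ a
    have huv := degQ_eq_degQ_iff.mpr hmem
    exact Set.indicator_eq_indicator
      ⟨hT u' v' huv hlt.2 a, hT v' u' huv.symm (huv ▸ hlt.2) a⟩ rfl

/-- a subset of the fiber `C_b` is the vertex set of a connected component
of `G(b)` iff it is the vertex set of a connected component of `Δ_gcd(b)`. -/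
theorem fiberGraph_gcdGraph_same_components (k : Type) [Field k] (n : ℕ)
    (L : AddSubgroup (Fin n → ℤ)) (hL : ∀ w ∈ L, (∀ i, 0 ≤ w i) → w = 0)
    (b : (Fin n → ℤ) ⧸ L) (S : Set {u : Fin n →₀ ℕ // degQ n L u = b}) :
    (∃ c : (fiberGraph k n L b).ConnectedComponent,
        S = {u | (fiberGraph k n L b).connectedComponentMk u = c}) ↔
    (∃ c : (gcdGraph n L b).ConnectedComponent,
        S = {u | (gcdGraph n L b).connectedComponentMk u = c}) := by
  refine SimpleGraph.exists_eq_supp_iff_of_reachable_eq ?_ S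
  exact SimpleGraph.reachable_eq_of_le_of_adj_reachable (gcdGraph_le_fiberGraph k hL)
    fun _ _ h => gcdGraph_reachable_of_mem_latticeIdealBelow (fiberGraph_adj.mp h).2
end
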